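/- arXiv:1805.04571 — 2 statements merged into one kernel-verified Lean document; each statement's English description precedes it below -/
import Mathlib

section
/- For every connected graph G of order n with minimum degree δ and every integer k with 2 ≤ k ≤ n, SW_k(G) ≤ ((k-1)/(k+1))·(3(n+1)/(δ+1))·C(n,k) + (3δ/(δ+1) + 2k)·C(n,k), and hence the average Steiner k-distance satisfies μ_k(G) ≤ ((k-1)/(k+1))·(3(n+1)/(δ+1)) + 3δ/(δ+1) + 2k. -/
open scoped Classical
open Finset

noncomputable def steinerDist {V : Type*} (G : SimpleGraph V) (S : Finset V) : ℕ :=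
  sInf {m : ℕ | ∃ H : G.Subgraph, H.Connected ∧ ↑S ⊆ H.verts ∧ H.edgeSet.ncard = m}

noncomputable def swk {V : Type*} [Fintype V] (k : ℕ) (G : SimpleGraph V) : ℕ :=
  ∑ S ∈ Finset.powersetCard k (Finset.univ : Finset V), steinerDist G S

noncomputable def wswk {V : Type*} [Fintype V] (k : ℕ) (G : SimpleGraph V) (c : V → ℕ) : ℕ :=
  ∑ S ∈ Finset.powersetCard k (Finset.univ : Finset (Σ v : V, Fin (c v))), steinerDist G (S.image Sigma.fst)

/-!
Greedily pick centres `c₀, c₁, …`, pairwise at distance at least `3`, each new one at distance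
exactly `3` from an earlier one, until every vertex is within distance `2` of a centre. Linking
each centre to that earlier one gives a tree of centres whose edges are walks of length at most
`3`; every vertex gets a home centre within distance `2`, and the closed neighbourhood of a
centre (at least `δ + 1` vertices) stays at home, so these neighbourhoods are disjoint.

For a `k`-set `S`, walks from one vertex of `S` to the others through their homes and the tree
span a connected subgraph with at most `2k + 3c` edges, where `c` counts the tree edges
separating `S`. Summing over `S`, a tree edge whose branch has `w` vertices is counted
`C(n,k) - C(w,k) - C(n-w,k)` times. By disjointness of the neighbourhoods at most
`(n - 2j)/(δ + 1) + 1` tree edges have both sides of size at least `j`; summing by layers in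
`j` against this bound, the total is largest when the sides are spread as `0, 1, …, n`, which
gives the bound `C(n,k) ((n+1)(k-1)/((k+1)(δ+1)) + δ/(δ+1))` for the sum over tree edges.
-/

/-- The number of `k`-subsets of an `n`-set meeting both a given `w`-subset and its complement
(in `ℚ`, so that it can be summed by parts). -/
def crossCount (n k w : ℕ) : ℚ := n.choose k - w.choose k - (n - w).choose k

section crossCount

variable {n k w : ℕ}

theorem crossCount_zero (hk : 0 < k) : crossCount n k 0 = 0 := by
  simp [crossCount, Nat.choose_eq_zero_of_lt hk]

theorem crossCount_sub (h : w ≤ n) : crossCount n k (n - w) = crossCount n k w := by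
  simp only [crossCount, Nat.sub_sub_self h]; ring

theorem crossCount_min (h : w ≤ n) : crossCount n k (min w (n - w)) = crossCount n k w := by
  rcases min_choice w (n - w) with hmin | hmin <;> rw [hmin]
  exact crossCount_sub h

theorem crossCount_le_choose : crossCount n k w ≤ n.choose k := by
  simp only [crossCount]
  linarith [(w.choose k).cast_nonneg (α := ℚ), ((n - w).choose k).cast_nonneg (α := ℚ)]

theorem crossCount_le_succ (h : 2 * (w + 1) ≤ n) :
    crossCount n k w ≤ crossCount n k (w + 1) := by
  obtain _ | k := k
  · simp [crossCount]
  have hpascal : (w + 1).choose (k + 1) + (n - (w + 1)).choose (k + 1)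
      ≤ w.choose (k + 1) + (n - w).choose (k + 1) := by
    have hnw : n - w = n - (w + 1) + 1 := by omega
    rw [hnw, Nat.choose_succ_succ' w, Nat.choose_succ_succ' (n - (w + 1))]
    have := Nat.choose_le_choose k (show w ≤ n - (w + 1) by omega)
    omega
  have := (Nat.cast_le (α := ℚ)).2 hpascal
  push_cast at this
  simp only [crossCount]
  linarith

theorem sum_range_crossCount :
    ∑ w ∈ range (n + 1), crossCount n k w = n.choose k * (n + 1) * (k - 1) / (k + 1) := by
  have hockey : ∑ w ∈ range (n + 1), w.choose k = (n + 1).choose (k + 1) := by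
    rw [← Nat.sum_Icc_choose, range_eq_Ico]
    refine (sum_subset (fun w hw => ?_) fun w _ hw => ?_).symm
    · simp only [mem_Icc, mem_Ico] at hw ⊢; omega
    · exact Nat.choose_eq_zero_of_lt (by simp only [mem_Icc, mem_Ico] at *; omega)
  have hreflect : ∑ w ∈ range (n + 1), (n - w).choose k = (n + 1).choose (k + 1) := by
    simpa [← hockey] using sum_range_reflect (fun w => w.choose k) (n + 1)
  have habsorb : ((n + 1) * n.choose k : ℚ) = (n + 1).choose (k + 1) * (k + 1) := by
    exact_mod_cast Nat.add_one_mul_choose_eq n k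
  simp only [crossCount, sum_sub_distrib, sum_const, card_range, nsmul_eq_mul]
  rw [← Nat.cast_sum, ← Nat.cast_sum, hockey, hreflect]
  field_simp
  push_cast
  linear_combination 2 * habsorb

end crossCount

theorem sum_comp_eq_sum_range_card_smul {ι M : Type*} [AddCommGroup M] (s : Finset ι)
    (a : ι → ℕ) (F : ℕ → M) (hF : F 0 = 0) {J : ℕ} (ha : ∀ z ∈ s, a z ≤ J) :
    ∑ z ∈ s, F (a z) = ∑ j ∈ range J, #{z ∈ s | j < a z} • (F (j + 1) - F j) := by
  have htele : ∀ z ∈ s, F (a z) = ∑ j ∈ range J, if j < a z then F (j + 1) - F j else 0 := by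
    intro z hz
    rw [← sum_filter, show {j ∈ range J | j < a z} = range (a z) by
      ext j; simp only [mem_filter, mem_range]; have := ha z hz; omega,
      sum_range_sub, hF, sub_zero]
  rw [sum_congr rfl htele, sum_comm]
  refine sum_congr rfl fun j _ => ?_
  rw [← sum_filter, sum_const]

theorem card_filter_lt_min {n j : ℕ} (h : 2 * (j + 1) ≤ n) :
    #{i ∈ range (n + 1) | j < min i (n - i)} = n - 1 - 2 * j := by
  rw [show {i ∈ range (n + 1) | j < min i (n - i)} = Ico (j + 1) (n - j) by
    ext i; simp only [mem_filter, mem_range, mem_Ico, lt_min_iff]; omega, Nat.card_Ico]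
  omega

theorem sum_crossCount_le {ι : Type*} (s : Finset ι) (w : ι → ℕ) {n k d : ℕ} (hk : 0 < k)
    (hw : ∀ z ∈ s, w z ≤ n)
    (hpack : ∀ j, 2 * j ≤ n →
      2 * j + #{z ∈ s | j ≤ w z ∧ j ≤ n - w z} * (d + 1) ≤ n + (d + 1)) :
    ∑ z ∈ s, crossCount n k (w z) ≤
      n.choose k * ((n + 1) * (k - 1) / ((k + 1) * (d + 1)) + d / (d + 1)) := by
  set F := crossCount n k
  have hincr : ∀ j ∈ range (n / 2), 0 ≤ F (j + 1) - F j := fun j hj =>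
    sub_nonneg.2 (crossCount_le_succ (by rw [mem_range] at hj; omega))
  have hcount : ∀ j ∈ range (n / 2), (#{z ∈ s | j < min (w z) (n - w z)} : ℚ) * (d + 1) ≤
      #{i ∈ range (n + 1) | j < min i (n - i)} + d := by
    intro j hj
    rw [mem_range] at hj
    have hpackj := hpack (j + 1) (by omega)
    rw [card_filter_lt_min (by omega)]
    simp only [lt_min_iff, Nat.lt_iff_add_one_le] at hpackj ⊢
    exact_mod_cast (by omega : #{z ∈ s | j + 1 ≤ w z ∧ j + 1 ≤ n - w z} * (d + 1)
      ≤ n - 1 - 2 * j + d)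
  have hlayer := sum_comp_eq_sum_range_card_smul s (fun z => min (w z) (n - w z)) F
    (crossCount_zero hk) (J := n / 2) (fun z _ => by omega)
  have hlayer' := sum_comp_eq_sum_range_card_smul (range (n + 1)) (fun i => min i (n - i)) F
    (crossCount_zero hk) (J := n / 2) (fun i _ => by omega)
  -- Layer by layer, compare with the configuration `w = 0, 1, …, n`.
  have key : (d + 1) * ∑ z ∈ s, F (w z) ≤ ∑ i ∈ range (n + 1), F i + d * F (n / 2) := by
    calc (d + 1) * ∑ z ∈ s, F (w z)
        = (d + 1) * ∑ z ∈ s, F (min (w z) (n - w z)) := by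
          rw [sum_congr rfl fun z hz => crossCount_min (hw z hz)]
      _ = ∑ j ∈ range (n / 2),
            (#{z ∈ s | j < min (w z) (n - w z)} * (d + 1)) * (F (j + 1) - F j) := by
          rw [hlayer, mul_sum]
          refine sum_congr rfl fun j _ => ?_
          rw [nsmul_eq_mul]; ring
      _ ≤ ∑ j ∈ range (n / 2),
            (#{i ∈ range (n + 1) | j < min i (n - i)} + d) * (F (j + 1) - F j) :=
          sum_le_sum fun j hj => mul_le_mul_of_nonneg_right (hcount j hj) (hincr j hj)
      _ = ∑ i ∈ range (n + 1), F (min i (n - i)) + d * F (n / 2) := by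
          simp only [hlayer', add_mul, sum_add_distrib, nsmul_eq_mul, ← mul_sum,
            sum_range_sub, crossCount_zero hk, F, sub_zero]
      _ = ∑ i ∈ range (n + 1), F i + d * F (n / 2) := by
          rw [sum_congr rfl fun i hi => crossCount_min (by rw [mem_range] at hi; omega)]
  rw [sum_range_crossCount] at key
  have hJ : d * F (n / 2) ≤ d * n.choose k :=
    mul_le_mul_of_nonneg_left crossCount_le_choose (by positivity)
  rw [show (n.choose k : ℚ) * ((n + 1) * (k - 1) / ((k + 1) * (d + 1)) + d / (d + 1)) =
      (n.choose k * (n + 1) * (k - 1) / (k + 1) + d * n.choose k) / (d + 1) by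
    field_simp, le_div_iff₀ (by positivity)]
  linarith

theorem card_filter_crossing {α : Type*} [Fintype α] (X : Finset α) {k : ℕ} (hk : 0 < k) :
    (#{S ∈ powersetCard k univ | ¬ S ⊆ X ∧ ¬ S ⊆ Xᶜ} : ℚ) =
      crossCount (Fintype.card α) k #X := by
  set A := powersetCard k (univ : Finset α)
  have hinside : ∀ Y : Finset α, {S ∈ A | S ⊆ Y} = powersetCard k Y := by
    intro Y; ext S; simp [A, mem_powersetCard, and_comm]
  have hdisj : Disjoint {S ∈ A | S ⊆ X} {S ∈ A | S ⊆ Xᶜ} := by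
    refine disjoint_filter.2 fun S hS hX hXc => ?_
    obtain ⟨v, hv⟩ := card_pos.1 ((mem_powersetCard_univ.1 hS).symm ▸ hk)
    exact (mem_compl.1 (hXc hv)) (hX hv)
  have hsplit := card_filter_add_card_filter_not (s := A) (fun S => ¬ S ⊆ X ∧ ¬ S ⊆ Xᶜ)
  rw [show {S ∈ A | ¬ (¬ S ⊆ X ∧ ¬ S ⊆ Xᶜ)} = {S ∈ A | S ⊆ X} ∪ {S ∈ A | S ⊆ Xᶜ} by
    ext S; simp only [mem_filter, mem_union]; tauto,
    card_union_of_disjoint hdisj, hinside, hinside, card_powersetCard, card_powersetCard,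
    card_compl, card_powersetCard, card_univ] at hsplit
  simp only [crossCount]
  rw [← hsplit]
  push_cast
  ring

theorem two_mul_add_card_mul_le_of_fibres {ι α : Type*} [Fintype α] [DecidableEq ι]
    (f : α → ι) {I : Finset ι} {a b : ι} (ha : a ∈ I) (hb : b ∈ I) (hab : a ≠ b) {d j : ℕ}
    (hd : ∀ i ∈ I, d ≤ #{x | f x = i}) (hja : j ≤ #{x | f x = a}) (hjb : j ≤ #{x | f x = b}) :
    2 * j + #I * d ≤ Fintype.card α + 2 * d := by
  have hsum : ∑ i ∈ I, #{x | f x = i} ≤ Fintype.card α := by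
    rw [← card_biUnion fun i _ i' _ hii' => disjoint_filter.2 fun x _ hx hx' => hii' (hx ▸ hx')]
    exact card_le_univ _
  have hb' : b ∈ I.erase a := mem_erase.2 ⟨hab.symm, hb⟩
  rw [← sum_erase_add I _ ha, ← sum_erase_add _ _ hb'] at hsum
  have hrest := card_nsmul_le_sum ((I.erase a).erase b) (fun i => #{x | f x = i}) d
    fun i hi => hd i (mem_of_mem_erase (mem_of_mem_erase hi))
  rw [← card_erase_add_one ha, ← card_erase_add_one hb', add_mul, add_mul]
  rw [smul_eq_mul] at hrest
  omega

/-- A rooted tree on `ℕ` with root `0`, given by its parent map. -/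
structure ParentTree where
  parent : ℕ → ℕ
  parent_zero : parent 0 = 0
  parent_lt : ∀ i, 0 < i → parent i < i

namespace ParentTree

variable {V : Type*} {G : SimpleGraph V} (T : ParentTree)

/-- `z` is an ancestor of `x`, possibly `x` itself. -/
def IsAncestor (z x : ℕ) : Prop := ∃ t, T.parent^[t] x = z

/-- The lowest ancestor of `x` in `I`; it is well defined as soon as `0 ∈ I`. -/
noncomputable def lowest (I : Finset ℕ) (x : ℕ) : ℕ :=
  Nat.findGreatest (fun z => z ∈ I ∧ T.IsAncestor z x) x

noncomputable def branch {α : Type*} [Fintype α] (home : α → ℕ) (z : ℕ) : Finset α :=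
  {v | T.IsAncestor z (home v)}

/-- Climbing from the larger of the two indices, the walks `leg` are concatenated along the
paths from `x` and `y` up to their lowest common ancestor. -/
def treeWalk (c : ℕ → V) (leg : ∀ i, G.Walk (c i) (c (T.parent i))) (x y : ℕ) :
    G.Walk (c x) (c y) :=
  if h : x = y then SimpleGraph.Walk.nil.copy rfl (congrArg c h)
  else if y < x then (leg x).append (treeWalk c leg (T.parent x) y)
  else (treeWalk c leg x (T.parent y)).append (leg y).reverse
termination_by x + y
decreasing_by
  · have := T.parent_lt x (by omega); omega
  · have := T.parent_lt y (by omega); omega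

variable {T} {x y z : ℕ}

theorem parent_le (i : ℕ) : T.parent i ≤ i := by
  rcases Nat.eq_zero_or_pos i with rfl | hi
  · rw [T.parent_zero]
  · exact (T.parent_lt i hi).le

theorem isAncestor_refl (x : ℕ) : T.IsAncestor x x := ⟨0, rfl⟩

theorem IsAncestor.of_parent (h : T.IsAncestor z (T.parent x)) : T.IsAncestor z x := by
  obtain ⟨t, ht⟩ := h
  exact ⟨t + 1, ht⟩

theorem isAncestor_iff_of_ne (h : z ≠ x) :
    T.IsAncestor z x ↔ T.IsAncestor z (T.parent x) := by
  refine ⟨fun ⟨t, ht⟩ => ?_, .of_parent⟩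
  cases t with
  | zero => exact absurd ht.symm h
  | succ t => exact ⟨t, ht⟩

theorem IsAncestor.trans (hyx : T.IsAncestor y x) (hzy : T.IsAncestor z y) :
    T.IsAncestor z x := by
  obtain ⟨s, rfl⟩ := hyx
  obtain ⟨t, rfl⟩ := hzy
  exact ⟨t + s, Function.iterate_add_apply _ t s x⟩

theorem IsAncestor.le (h : T.IsAncestor z x) : z ≤ x := by
  obtain ⟨t, rfl⟩ := h
  induction t with
  | zero => rfl
  | succ t ih => exact (Function.iterate_succ_apply' T.parent t x ▸ parent_le _).trans ih

theorem IsAncestor.total (hy : T.IsAncestor y x) (hz : T.IsAncestor z x) :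
    T.IsAncestor y z ∨ T.IsAncestor z y := by
  obtain ⟨s, rfl⟩ := hy
  obtain ⟨t, rfl⟩ := hz
  rcases le_total s t with hst | hts
  · exact .inr ⟨t - s, by rw [← Function.iterate_add_apply, Nat.sub_add_cancel hst]⟩
  · exact .inl ⟨s - t, by rw [← Function.iterate_add_apply, Nat.sub_add_cancel hts]⟩

theorem isAncestor_zero (x : ℕ) : T.IsAncestor 0 x := by
  induction x using Nat.strong_induction_on with
  | _ x ih =>
    rcases Nat.eq_zero_or_pos x with rfl | hx
    · exact isAncestor_refl 0
    · exact (ih _ (T.parent_lt x hx)).of_parent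

variable {I : Finset ℕ}

theorem lowest_mem (h0 : 0 ∈ I) (x : ℕ) :
    T.lowest I x ∈ I ∧ T.IsAncestor (T.lowest I x) x :=
  Nat.findGreatest_spec (P := fun z => z ∈ I ∧ T.IsAncestor z x) (Nat.zero_le x)
    ⟨h0, isAncestor_zero x⟩

theorem IsAncestor.isAncestor_lowest (h0 : 0 ∈ I) (hz : z ∈ I) (h : T.IsAncestor z x) :
    T.IsAncestor z (T.lowest I x) := by
  have hle : z ≤ T.lowest I x := Nat.le_findGreatest h.le ⟨hz, h⟩
  rcases h.total (lowest_mem h0 x).2 with hzl | hlz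
  · exact hzl
  · exact le_antisymm hle hlz.le ▸ isAncestor_refl z

theorem lowest_self (hx : x ∈ I) : T.lowest I x = x :=
  Nat.findGreatest_eq ⟨hx, isAncestor_refl x⟩

theorem lowest_eq_of_isAncestor (h0 : 0 ∈ I) (hz : z ∈ I)
    (hleaf : ∀ y ∈ I, T.IsAncestor z y → y = z) (h : T.IsAncestor z x) : T.lowest I x = z :=
  hleaf _ (lowest_mem h0 x).1 (h.isAncestor_lowest h0 hz)

theorem mem_edges_treeWalk {c : ℕ → V} {leg : ∀ i, G.Walk (c i) (c (T.parent i))} {x y : ℕ}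
    {e : Sym2 V} (he : e ∈ (T.treeWalk c leg x y).edges) :
    ∃ z, Xor (T.IsAncestor z x) (T.IsAncestor z y) ∧ e ∈ (leg z).edges := by
  fun_induction T.treeWalk c leg x y with
  | case1 => simp at he
  | case2 x y hxy hyx ih =>
    rw [SimpleGraph.Walk.edges_append, List.mem_append] at he
    rcases he with he | he
    · exact ⟨x, .inl ⟨isAncestor_refl x, fun h => by have := h.le; omega⟩, he⟩
    obtain ⟨z, hz, hez⟩ := ih he
    have hzx : z ≠ x := by
      rintro rfl
      have := T.parent_lt z (by omega)
      rcases hz with ⟨h, -⟩ | ⟨h, -⟩ <;> (have := h.le; omega)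
    exact ⟨z, by rwa [isAncestor_iff_of_ne hzx], hez⟩
  | case3 x y hxy hyx ih =>
    rw [SimpleGraph.Walk.edges_append, List.mem_append, SimpleGraph.Walk.edges_reverse,
      List.mem_reverse] at he
    rcases he with he | he
    · obtain ⟨z, hz, hez⟩ := ih he
      have hzy : z ≠ y := by
        rintro rfl
        have := T.parent_lt z (by omega)
        rcases hz with ⟨h, -⟩ | ⟨h, -⟩ <;> (have := h.le; omega)
      exact ⟨z, by rwa [isAncestor_iff_of_ne hzy], hez⟩
    · exact ⟨y, .inr ⟨isAncestor_refl y, fun h => by have := h.le; omega⟩, he⟩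

/-- Two distinct nodes of `insert 0 C` whose regions (the nodes having them as lowest ancestor
in `insert 0 C`) are large: the deepest node `u` of `C`, and either the deepest node of
`insert 0 C` off the path to `u` or, if `C` is a chain, the root, whose region then contains
the complement of the topmost branch. -/
theorem exists_two_large_regions {α : Type*} [Fintype α] (home : α → ℕ) {C : Finset ℕ}
    {j : ℕ} (hC0 : 0 ∉ C) (hC : C.Nonempty)
    (hlarge : ∀ z ∈ C, j ≤ #(T.branch home z) ∧ j ≤ Fintype.card α - #(T.branch home z)) :
    ∃ a ∈ insert 0 C, ∃ b ∈ insert 0 C, a ≠ b ∧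
      j ≤ #{v | T.lowest (insert 0 C) (home v) = a} ∧
      j ≤ #{v | T.lowest (insert 0 C) (home v) = b} := by
  set I := insert 0 C
  have h0 : 0 ∈ I := mem_insert_self 0 C
  have hbranch : ∀ z ∈ C, ∀ a, (∀ x, T.IsAncestor z x → T.lowest I x = a) →
      j ≤ #{v | T.lowest I (home v) = a} := fun z hz a h =>
    (hlarge z hz).1.trans (card_le_card fun v hv => by
      simp only [branch, mem_filter, mem_univ, true_and] at hv ⊢; exact h _ hv)
  obtain ⟨u, huC, hmax⟩ : ∃ u ∈ C, ∀ y ∈ C, y ≤ u :=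
    ⟨C.max' hC, max'_mem C hC, le_max' C⟩
  have hu : ∀ x, T.IsAncestor u x → T.lowest I x = u := by
    refine fun x => lowest_eq_of_isAncestor h0 (mem_insert_of_mem huC) fun y hy huy => ?_
    rcases mem_insert.1 hy with rfl | hyC
    · exact (Nat.zero_le u).antisymm huy.le
    · exact (hmax y hyC).antisymm huy.le
  refine ⟨u, mem_insert_of_mem huC, ?_⟩
  rcases (I.filter (¬ T.IsAncestor · u)).eq_empty_or_nonempty with hD | hD
  · obtain ⟨w, hwC, hmin⟩ : ∃ w ∈ C, ∀ y ∈ C, w ≤ y :=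
      ⟨C.min' hC, min'_mem C hC, min'_le C⟩
    have hchain : ∀ y ∈ I, T.IsAncestor y u := fun y hy => by
      by_contra hyu; exact (filter_eq_empty_iff.1 hD) hy hyu
    refine ⟨0, h0, fun hu0 => hC0 (hu0 ▸ huC), hbranch u huC u hu,
      (hlarge w hwC).2.trans ?_⟩
    rw [← card_compl]
    refine card_le_card fun v hv => ?_
    simp only [branch, mem_compl, mem_filter, mem_univ, true_and] at hv ⊢
    obtain ⟨hlI, hl⟩ := lowest_mem h0 (home v)
    rcases mem_insert.1 hlI with hl0 | hlC
    · exact hl0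
    · refine absurd ?_ hv
      rcases (hchain w (mem_insert_of_mem hwC)).total (hchain _ hlI) with hwl | hlw
      · exact hl.trans hwl
      · rwa [(hmin _ hlC).antisymm hlw.le]
  · obtain ⟨b, hbD, hbmax⟩ := exists_max_image _ id hD
    obtain ⟨hbI, hbu⟩ := mem_filter.1 hbD
    have hbC : b ∈ C :=
      (mem_insert.1 hbI).resolve_left fun hb0 => hbu (hb0 ▸ isAncestor_zero u)
    refine ⟨b, hbI, by rintro rfl; exact hbu (isAncestor_refl u), hbranch u huC u hu,
      hbranch b hbC b fun x => lowest_eq_of_isAncestor h0 hbI fun y hy hby => ?_⟩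
    have hyu : ¬ T.IsAncestor y u := fun hyu => hbu (hyu.trans hby)
    exact (hbmax y (mem_filter.2 ⟨hy, hyu⟩)).antisymm hby.le

/-- The regions of the nodes of `insert 0 C` are disjoint, each contains a fibre of `home`, and
two of them are large. -/
theorem two_mul_add_card_filter_mul_le {α : Type*} [Fintype α] (home : α → ℕ) {m d j : ℕ}
    (hfibre : ∀ z < m, d ≤ #{v | home v = z}) (hj : 2 * j ≤ Fintype.card α) :
    2 * j + #{z ∈ Ico 1 m | j ≤ #(T.branch home z) ∧
      j ≤ Fintype.card α - #(T.branch home z)} * d ≤ Fintype.card α + d := by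
  set C := {z ∈ Ico 1 m | j ≤ #(T.branch home z) ∧ j ≤ Fintype.card α - #(T.branch home z)}
  rcases C.eq_empty_or_nonempty with hC | hC
  · rw [hC, card_empty]; omega
  have hCm : ∀ z ∈ C, 1 ≤ z ∧ z < m := fun z hz => mem_Ico.1 (mem_filter.1 hz).1
  have hC0 : 0 ∉ C := fun h => by have := hCm 0 h; omega
  obtain ⟨a, ha, b, hb, hab, hja, hjb⟩ :=
    exists_two_large_regions home hC0 hC fun z hz => (mem_filter.1 hz).2
  have hregion : ∀ z ∈ insert 0 C, d ≤ #{v | T.lowest (insert 0 C) (home v) = z} := by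
    intro z hz
    have hzm : z < m := by
      obtain ⟨z', hz'⟩ := hC
      rcases mem_insert.1 hz with rfl | hzC
      · have := hCm z' hz'; omega
      · exact (hCm z hzC).2
    refine (hfibre z hzm).trans (card_le_card fun v hv => ?_)
    simp only [mem_filter, mem_univ, true_and] at hv ⊢
    rw [hv, lowest_self hz]
  have := two_mul_add_card_mul_le_of_fibres (fun v => T.lowest (insert 0 C) (home v))
    ha hb hab hregion hja hjb
  rw [card_insert_of_notMem hC0, add_mul] at this
  omega

end ParentTree

open SimpleGraph

theorem SimpleGraph.Walk.card_edges_toFinset_le {V : Type*} {G : SimpleGraph V} {u v : V}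
    (p : G.Walk u v) : #p.edges.toFinset ≤ p.length :=
  p.edges.toFinset_card_le.trans p.length_edges.le

theorem steinerDist_le_card_of_walks {V : Type*} {G : SimpleGraph V} {S : Finset V}
    (hS : S.Nonempty) {u : V} (p : ∀ v, G.Walk u v) {E : Finset (Sym2 V)}
    (hE : ∀ v ∈ S, ∀ e ∈ (p v).edges, e ∈ E) : steinerDist G S ≤ #E := by
  set H := S.sup' hS fun v => (p v).toSubgraph
  have hconn : H.Connected ∧ u ∈ H.verts :=
    sup'_induction (p := fun H : G.Subgraph => H.Connected ∧ u ∈ H.verts) hS _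
      (fun H₁ h₁ H₂ h₂ =>
        ⟨Subgraph.connected_sup h₁.1.preconnected h₂.1.preconnected ⟨u, h₁.2, h₂.2⟩, .inl h₁.2⟩)
      fun v _ => ⟨(p v).toSubgraph_connected, (p v).start_mem_verts_toSubgraph⟩
  have hedges : H.edgeSet ⊆ E :=
    sup'_induction (p := fun H : G.Subgraph => H.edgeSet ⊆ E) hS _
      (fun H₁ h₁ H₂ h₂ => by rw [Subgraph.edgeSet_sup]; exact Set.union_subset h₁ h₂)
      fun v hv e he => hE v hv e (by rwa [Walk.edgeSet_toSubgraph] at he)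
  have hmem : H.edgeSet.ncard ∈
      {m | ∃ H : G.Subgraph, H.Connected ∧ ↑S ⊆ H.verts ∧ H.edgeSet.ncard = m} :=
    ⟨H, hconn.1, fun v hv => (le_sup' (fun v => (p v).toSubgraph) hv).1
      (p v).end_mem_verts_toSubgraph, rfl⟩
  calc steinerDist G S ≤ H.edgeSet.ncard := Nat.sInf_le hmem
    _ ≤ #E := by
      rw [← Set.ncard_coe_finset E]
      exact Set.ncard_le_ncard hedges E.finite_toSet

theorem SimpleGraph.Connected.exists_adj_dist_lt {V : Type*} {G : SimpleGraph V}
    (hG : G.Connected) {u a : V} (hua : u ≠ a) :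
    ∃ u', G.Adj u u' ∧ G.dist u' a < G.dist u a := by
  obtain ⟨p, hp⟩ := hG.exists_walk_length_eq_dist u a
  cases p with
  | nil => exact absurd rfl hua
  | cons hadj q =>
    refine ⟨_, hadj, (dist_le q).trans_lt ?_⟩
    rw [← hp, Walk.length_cons]
    omega

theorem SimpleGraph.Connected.exists_far_at_dist_three {V : Type*} [Fintype V] {G : SimpleGraph V}
    (hG : G.Connected) {P : Finset V} (hP : P.Nonempty) {v : V}
    (hv : ∀ a ∈ P, 3 ≤ G.dist v a) :
    ∃ u, (∀ a ∈ P, 3 ≤ G.dist u a) ∧ ∃ a ∈ P, G.dist u a = 3 := by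
  obtain ⟨⟨u, a⟩, hua, hmin⟩ := exists_min_image
    (({u | ∀ a ∈ P, 3 ≤ G.dist u a} : Finset V) ×ˢ P) (fun x => G.dist x.1 x.2)
    ⟨(v, hP.choose), mem_product.2 ⟨by simpa using hv, hP.choose_spec⟩⟩
  simp only [mem_product, mem_filter, mem_univ, true_and] at hua
  obtain ⟨hfar, ha⟩ := hua
  refine ⟨u, hfar, a, ha, le_antisymm ?_ (hfar a ha)⟩
  by_contra! h4
  obtain ⟨u', hadj, hu'⟩ := hG.exists_adj_dist_lt (show u ≠ a by rintro rfl; simp at h4)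
  have hfar' : ∀ b ∈ P, 3 ≤ G.dist u' b := fun b hb => by
    have hab := hmin (u, b) (mem_product.2 ⟨mem_filter.2 ⟨mem_univ _, hfar⟩, hb⟩)
    have htri := hG.dist_triangle (u := u) (v := u') (w := b)
    rw [dist_eq_one_iff_adj.2 hadj] at htri
    simp only at hab
    omega
  have := hmin (u', a) (mem_product.2 ⟨mem_filter.2 ⟨mem_univ _, hfar'⟩, ha⟩)
  simp only at this
  omega

section

variable {V : Type*} [Fintype V] {G : SimpleGraph V}

def IsCentreSeq (G : SimpleGraph V) (T : ParentTree) (m : ℕ) (c : ℕ → V) : Prop :=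
  (∀ i, 0 < i → i < m → G.dist (c i) (c (T.parent i)) ≤ 3) ∧
    ∀ i < m, ∀ j < m, i ≠ j → 3 ≤ G.dist (c i) (c j)

namespace IsCentreSeq

variable {T : ParentTree} {m : ℕ} {c : ℕ → V}

theorem le_card (h : IsCentreSeq G T m c) : m ≤ Fintype.card V := by
  have hinj : Set.InjOn c (range m : Set ℕ) := fun i hi j hj hij => by
    by_contra hne
    have := h.2 i (mem_range.1 hi) j (mem_range.1 hj) hne
    rw [hij, dist_self] at this
    omega
  simpa using card_le_card_of_injOn c (fun _ _ => mem_univ _) hinj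

theorem exists_succ (hG : G.Connected) (h : IsCentreSeq G T m c) (hm : 0 < m) {v : V}
    (hv : ∀ i < m, 2 < G.dist v (c i)) : ∃ T' c', IsCentreSeq G T' (m + 1) c' := by
  have hP : ((range m).image c).Nonempty := ⟨c 0, mem_image_of_mem c (mem_range.2 hm)⟩
  obtain ⟨u, hfar, _, ha, hu⟩ := hG.exists_far_at_dist_three hP (v := v) (by
    simp only [mem_image, mem_range]; rintro _ ⟨i, hi, rfl⟩; exact hv i hi)
  obtain ⟨j, hj, rfl⟩ := by simpa only [mem_image, mem_range] using ha
  simp only [mem_image, mem_range, forall_exists_index, and_imp,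
    forall_apply_eq_imp_iff₂] at hfar
  refine ⟨⟨Function.update T.parent m j, by rw [Function.update_of_ne hm.ne, T.parent_zero],
    fun i hi => ?_⟩, Function.update c m u, fun i hi him => ?_, fun i hi i' hi' hii' => ?_⟩
  · rcases eq_or_ne i m with rfl | him
    · simpa using hj
    · simpa [him] using T.parent_lt i hi
  · rcases eq_or_ne i m with rfl | him'
    · simp [hj.ne, hu]
    · have := T.parent_lt i hi
      simpa [him', show T.parent i ≠ m by omega] using h.1 i hi (by omega)
  · rcases eq_or_ne i m with rfl | him
    · simpa [hii'.symm, (show i' < i by omega).ne] using hfar i' (by omega)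
    · rcases eq_or_ne i' m with rfl | him'
      · rw [SimpleGraph.dist_comm]
        simpa [him] using hfar i (by omega)
      · simpa [him, him'] using h.2 i (by omega) i' (by omega) hii'

end IsCentreSeq

theorem exists_isCentreSeq_forall_dist_le_two [Nonempty V] (hG : G.Connected) :
    ∃ T m c, 0 < m ∧ IsCentreSeq G T m c ∧ ∀ v, ∃ i < m, G.dist v (c i) ≤ 2 := by
  by_contra! hgrow
  have hseq : ∀ m, ∃ T c, IsCentreSeq G T (m + 1) c := by
    intro m
    induction m with
    | zero =>
      exact ⟨⟨fun _ => 0, rfl, fun _ h => h⟩, fun _ => Classical.arbitrary V,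
        fun i hi h1 => by omega, fun i hi j hj hij => by omega⟩
    | succ m ih =>
      obtain ⟨T, c, h⟩ := ih
      obtain ⟨v, hv⟩ := hgrow T (m + 1) c (by omega) h
      exact h.exists_succ hG (by omega) hv
  obtain ⟨T, c, h⟩ := hseq (Fintype.card V)
  have := h.le_card
  omega

/-- Centres of `G` linked into a tree by walks of length at most `3`, and a home centre within
distance `2` for every vertex; the last field makes the closed neighbourhoods of the centres
disjoint. -/
structure CentreTree (G : SimpleGraph V) extends ParentTree where
  size : ℕ
  centre : ℕ → V
  home : V → ℕ
  leg : ∀ i, G.Walk (centre i) (centre (parent i))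
  length_leg_le : ∀ i, 0 < i → i < size → (leg i).length ≤ 3
  home_lt : ∀ v, home v < size
  homeWalk : ∀ v, G.Walk v (centre (home v))
  length_homeWalk_le : ∀ v, (homeWalk v).length ≤ 2
  home_eq_of_dist_le_one : ∀ v, ∀ i < size, G.dist v (centre i) ≤ 1 → home v = i

theorem CentreTree.nonempty [Nonempty V] (hG : G.Connected) : Nonempty (CentreTree G) := by
  obtain ⟨T, m, c, -, ⟨hparent, hsep⟩, hcover⟩ := exists_isCentreSeq_forall_dist_le_two hG
  -- a centre within distance `1` is unique, as the centres are `3` apart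
  let homeOf : V → ℕ := fun v =>
    if h : ∃ i < m, G.dist v (c i) ≤ 1 then h.choose else (hcover v).choose
  have home_spec : ∀ v, homeOf v < m ∧ G.dist v (c (homeOf v)) ≤ 2 := by
    intro v
    by_cases h : ∃ i < m, G.dist v (c i) ≤ 1
    · simp only [homeOf, dif_pos h]; exact ⟨h.choose_spec.1, by linarith [h.choose_spec.2]⟩
    · simp only [homeOf, dif_neg h]; exact (hcover v).choose_spec
  have home_eq : ∀ v, ∀ i < m, G.dist v (c i) ≤ 1 → homeOf v = i := by
    intro v i hi hvi
    have h : ∃ i < m, G.dist v (c i) ≤ 1 := ⟨i, hi, hvi⟩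
    simp only [homeOf, dif_pos h]
    by_contra hne
    have hfar := hsep _ h.choose_spec.1 i hi hne
    have htri := hG.dist_triangle (u := c h.choose) (v := v) (w := c i)
    rw [SimpleGraph.dist_comm (u := c h.choose) (v := v)] at htri
    linarith [h.choose_spec.2]
  exact ⟨{
      toParentTree := T
      size := m
      centre := c
      home := homeOf
      leg := fun i => (hG.exists_walk_length_eq_dist _ _).choose
      length_leg_le := fun i hi him => by
        rw [(hG.exists_walk_length_eq_dist _ _).choose_spec]; exact hparent i hi him
      home_lt := fun v => (home_spec v).1
      homeWalk := fun v => (hG.exists_walk_length_eq_dist _ _).choose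
      length_homeWalk_le := fun v => by
        rw [(hG.exists_walk_length_eq_dist _ _).choose_spec]; exact (home_spec v).2
      home_eq_of_dist_le_one := home_eq }⟩

namespace CentreTree

variable (t : CentreTree G)

/-- Join one vertex of `S` to all the others through their home centres and the tree. -/
theorem steinerDist_le {S : Finset V} (hS : S.Nonempty) :
    steinerDist G S ≤ 2 * #S + 3 * #{z ∈ Ico 1 t.size |
      ¬ S ⊆ t.branch t.home z ∧ ¬ S ⊆ (t.branch t.home z)ᶜ} := by
  obtain ⟨v₀, hv₀⟩ := hS
  set cut := {z ∈ Ico 1 t.size | ¬ S ⊆ t.branch t.home z ∧ ¬ S ⊆ (t.branch t.home z)ᶜ}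
  have hcut : ∀ v ∈ S, ∀ z, Xor (t.IsAncestor z (t.home v₀)) (t.IsAncestor z (t.home v)) →
      z ∈ cut := by
    intro v hv z hz
    have hz0 : z ≠ 0 := by
      rintro rfl
      simp only [ParentTree.isAncestor_zero, xor_self] at hz
    have hsplit : ∀ w₁ ∈ S, ∀ w₂ ∈ S, t.IsAncestor z (t.home w₁) →
        ¬ t.IsAncestor z (t.home w₂) → z ∈ cut := fun w₁ hw₁ w₂ hw₂ h₁ h₂ =>
      mem_filter.2 ⟨mem_Ico.2 ⟨Nat.one_le_iff_ne_zero.2 hz0, h₁.le.trans_lt (t.home_lt w₁)⟩,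
        fun hsub => h₂ (by simpa [ParentTree.branch] using hsub hw₂),
        fun hsub => by simpa [ParentTree.branch, h₁] using hsub hw₁⟩
    rcases hz with ⟨h₁, h₂⟩ | ⟨h₁, h₂⟩
    · exact hsplit v₀ hv₀ v hv h₁ h₂
    · exact hsplit v hv v₀ hv₀ h₁ h₂
  set E := S.biUnion (fun v => (t.homeWalk v).edges.toFinset) ∪
    cut.biUnion (fun z => (t.leg z).edges.toFinset)
  have hE : ∀ v ∈ S, ∀ e ∈ ((t.homeWalk v₀).append ((t.treeWalk t.centre t.leg (t.home v₀)
      (t.home v)).append (t.homeWalk v).reverse)).edges, e ∈ E := by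
    intro v hv e he
    simp only [Walk.edges_append, Walk.edges_reverse, List.mem_append, List.mem_reverse] at he
    rcases he with he | he | he
    · exact mem_union_left _ (mem_biUnion.2 ⟨v₀, hv₀, List.mem_toFinset.2 he⟩)
    · obtain ⟨z, hz, hez⟩ := ParentTree.mem_edges_treeWalk he
      exact mem_union_right _ (mem_biUnion.2 ⟨z, hcut v hv z hz, List.mem_toFinset.2 hez⟩)
    · exact mem_union_left _ (mem_biUnion.2 ⟨v, hv, List.mem_toFinset.2 he⟩)
  refine (steinerDist_le_card_of_walks ⟨v₀, hv₀⟩ _ hE).trans <| (card_union_le _ _).trans ?_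
  gcongr
  · exact (card_biUnion_le_card_mul _ _ 2 fun v _ =>
      (Walk.card_edges_toFinset_le _).trans (t.length_homeWalk_le v)).trans_eq (mul_comm _ _)
  · refine (card_biUnion_le_card_mul _ _ 3 fun z hz => ?_).trans_eq (mul_comm _ _)
    obtain ⟨h1, h2⟩ := mem_Ico.1 (mem_filter.1 hz).1
    exact (Walk.card_edges_toFinset_le _).trans (t.length_leg_le z h1 h2)

theorem swk_le {k : ℕ} (hk : 0 < k) :
    (swk k G : ℚ) ≤ 2 * k * (Fintype.card V).choose k +
      3 * ∑ z ∈ Ico 1 t.size, crossCount (Fintype.card V) k #(t.branch t.home z) := by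
  set cross : Finset V → ℕ → Prop := fun S z =>
    ¬ S ⊆ t.branch t.home z ∧ ¬ S ⊆ (t.branch t.home z)ᶜ
  have hbound : swk k G ≤
      ∑ S ∈ powersetCard k univ, (2 * k + 3 * #{z ∈ Ico 1 t.size | cross S z}) :=
    sum_le_sum fun S hS => by
      have hcard := (mem_powersetCard_univ.1 hS)
      rw [← hcard]
      exact t.steinerDist_le (card_pos.1 (hcard ▸ hk))
  have hswap : ∑ S ∈ powersetCard k univ, #{z ∈ Ico 1 t.size | cross S z} =
      ∑ z ∈ Ico 1 t.size, #{S ∈ powersetCard k univ | cross S z} :=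
    sum_card_bipartiteAbove_eq_sum_card_bipartiteBelow _
  rw [sum_add_distrib, sum_const, card_powersetCard, card_univ, ← mul_sum, hswap,
    smul_eq_mul] at hbound
  calc (swk k G : ℚ)
      ≤ (((Fintype.card V).choose k * (2 * k) +
          3 * ∑ z ∈ Ico 1 t.size, #{S ∈ powersetCard k univ | cross S z} : ℕ) : ℚ) := by
        exact_mod_cast hbound
    _ = _ := by
      push_cast
      rw [sum_congr rfl fun z _ => card_filter_crossing _ hk]
      ring

theorem minDegree_add_one_le_card_home {i : ℕ} (hi : i < t.size) :
    G.minDegree + 1 ≤ #{v | t.home v = i} := by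
  have hnbhd : insert (t.centre i) (G.neighborFinset (t.centre i)) ⊆
      ({v | t.home v = i} : Finset V) := by
    intro v hv
    refine mem_filter.2 ⟨mem_univ v, t.home_eq_of_dist_le_one v i hi ?_⟩
    rcases mem_insert.1 hv with rfl | hadj
    · simp
    · exact (dist_eq_one_iff_adj.2 ((mem_neighborFinset _ _ _).1 hadj).symm).le
  calc G.minDegree + 1 ≤ G.degree (t.centre i) + 1 := by gcongr; exact G.minDegree_le_degree _
    _ = #(insert (t.centre i) (G.neighborFinset (t.centre i))) := by
      rw [card_insert_of_notMem (by simp), card_neighborFinset_eq_degree]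
    _ ≤ _ := card_le_card hnbhd

end CentreTree

end

/-- for connected G of order n, minimum degree δ and 2 ≤ k ≤ n,
SW_k(G) ≤ ((k-1)/(k+1))(3(n+1)/(δ+1))·C(n,k) + (3δ/(δ+1)+2k)·C(n,k), and hence
μ_k(G) = SW_k(G)/C(n,k) ≤ ((k-1)/(k+1))(3(n+1)/(δ+1)) + 3δ/(δ+1) + 2k. -/
theorem steiner_wiener_min_degree {V : Type*} [Fintype V]
    (G : SimpleGraph V) (hG : G.Connected) (k : ℕ) (hk2 : 2 ≤ k)
    (hkn : k ≤ Fintype.card V) :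
    (swk k G : ℚ) ≤
      ((k : ℚ) - 1) / ((k : ℚ) + 1) * (3 * ((Fintype.card V : ℚ) + 1) / ((G.minDegree : ℚ) + 1)) *
          Nat.choose (Fintype.card V) k +
        (3 * (G.minDegree : ℚ) / ((G.minDegree : ℚ) + 1) + 2 * k) *
          Nat.choose (Fintype.card V) k ∧
    (swk k G : ℚ) / Nat.choose (Fintype.card V) k ≤
      ((k : ℚ) - 1) / ((k : ℚ) + 1) * (3 * ((Fintype.card V : ℚ) + 1) / ((G.minDegree : ℚ) + 1)) +
        3 * (G.minDegree : ℚ) / ((G.minDegree : ℚ) + 1) + 2 * k := by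
  have : Nonempty V := Fintype.card_pos_iff.1 (by omega)
  obtain ⟨t⟩ := CentreTree.nonempty hG
  have hcross := sum_crossCount_le (Ico 1 t.size) (fun z => #(t.branch t.home z)) (k := k)
    (by omega) (fun z _ => card_le_univ _) fun j hj =>
      ParentTree.two_mul_add_card_filter_mul_le t.home
        (fun z hz => t.minDegree_add_one_le_card_home hz) hj
  have hchoose : (0 : ℚ) < (Fintype.card V).choose k := by exact_mod_cast Nat.choose_pos hkn
  have hbound : (swk k G : ℚ) ≤ 2 * k * (Fintype.card V).choose k + 3 *
      ((Fintype.card V).choose k * ((Fintype.card V + 1) * (k - 1) /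
        ((k + 1) * (G.minDegree + 1)) + G.minDegree / (G.minDegree + 1))) :=
    (t.swk_le (by omega)).trans (by gcongr)
  refine ⟨hbound.trans_eq (by field_simp; ring), ?_⟩
  rw [div_le_iff₀ hchoose]
  exact hbound.trans_eq (by field_simp; ring)
end

section
/- Let G be a connected graph, T a spanning tree of G, and suppose every vertex v of T is within distance r (in T) of a designated vertex a_v in a set A ⊆ V(T). Let c(a) = |{v : a_v = a}| for a ∈ A and c(v)=0 otherwise. Then SW_k(T) ≤ SW_k(T,c) + r·k·C(n,k), where n = |V(T)|. -/
/-!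
Joining each `v ∈ S` to its designated vertex `a v` by a geodesic of `T` turns a Steiner tree
of `a '' S` into a connected subgraph containing `S`, so `d(S) ≤ d(a '' S) + r·|S|`. Numbering
the vertices of each fibre of `a` identifies `V` with the vertex set `V_c` of the blow-up, `v`
becoming a copy of `a v`; under this identification the `k`-subsets of `V` are the `k`-subsets
of `V_c`, and `S` corresponds to a set with originals `a '' S`. Summing over all `k`-subsets
gives the bound.
-/

open scoped Classical
open Finset

namespace SimpleGraph

variable {V : Type*} {G : SimpleGraph V}

lemma Connected.top_subgraph_connected (hG : G.Connected) : (⊤ : G.Subgraph).Connected := by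
  rw [Subgraph.connected_iff']
  exact Subgraph.topIso.connected_iff.mpr hG

lemma Walk.ncard_edgeSet_toSubgraph_le_length {u v : V} (p : G.Walk u v) :
    p.toSubgraph.edgeSet.ncard ≤ p.length := by
  rw [Walk.edgeSet_toSubgraph, ← p.coe_edges_toFinset, Set.ncard_coe_finset, ← p.length_edges]
  exact p.edges.toFinset_card_le

lemma steinerDist_le_ncard_edgeSet {S : Finset V} (H : G.Subgraph) (hH : H.Connected)
    (hS : ↑S ⊆ H.verts) : steinerDist G S ≤ H.edgeSet.ncard :=
  Nat.sInf_le ⟨H, hH, hS, rfl⟩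

lemma Connected.exists_subgraph_ncard_edgeSet_eq_steinerDist (hG : G.Connected)
    (S : Finset V) :
    ∃ H : G.Subgraph, H.Connected ∧ ↑S ⊆ H.verts ∧ H.edgeSet.ncard = steinerDist G S := by
  exact Nat.sInf_mem (s := {m | ∃ H : G.Subgraph, H.Connected ∧ ↑S ⊆ H.verts ∧
    H.edgeSet.ncard = m}) ⟨_, ⊤, hG.top_subgraph_connected, by simp, rfl⟩

lemma Connected.steinerDist_mono (hG : G.Connected) {S S' : Finset V} (h : S ⊆ S') :
    steinerDist G S ≤ steinerDist G S' := by
  obtain ⟨H, hH, hS', hcard⟩ := hG.exists_subgraph_ncard_edgeSet_eq_steinerDist S'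
  exact hcard ▸ steinerDist_le_ncard_edgeSet H hH ((coe_subset.mpr h).trans hS')

lemma Connected.steinerDist_insert_le (hG : G.Connected) {S : Finset V} {u : V} (hu : u ∈ S)
    (v : V) : steinerDist G (insert v S) ≤ steinerDist G S + G.dist v u := by
  obtain ⟨H, hH, hS, hcard⟩ := hG.exists_subgraph_ncard_edgeSet_eq_steinerDist S
  obtain ⟨p, hp⟩ := hG.exists_walk_length_eq_dist v u
  have hconn : (H ⊔ p.toSubgraph).Connected :=
    Subgraph.connected_sup hH.preconnected p.toSubgraph_connected.preconnected
      ⟨u, hS hu, p.end_mem_verts_toSubgraph⟩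
  have hverts : ↑(insert v S) ⊆ (H ⊔ p.toSubgraph).verts := by
    rw [coe_insert, Subgraph.verts_sup]
    exact Set.insert_subset (Or.inr p.start_mem_verts_toSubgraph) (hS.trans Set.subset_union_left)
  calc steinerDist G (insert v S) ≤ (H ⊔ p.toSubgraph).edgeSet.ncard :=
        steinerDist_le_ncard_edgeSet _ hconn hverts
    _ ≤ H.edgeSet.ncard + p.toSubgraph.edgeSet.ncard := by
        rw [Subgraph.edgeSet_sup]
        exact Set.ncard_union_le _ _
    _ ≤ steinerDist G S + G.dist v u := by
        rw [hcard, ← hp]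
        gcongr
        exact p.ncard_edgeSet_toSubgraph_le_length

lemma Connected.steinerDist_union_le (hG : G.Connected) (f : V → V) {B S : Finset V}
    (hS : S.image f ⊆ B) :
    steinerDist G (S ∪ B) ≤ steinerDist G B + ∑ v ∈ S, G.dist v (f v) := by
  induction S using Finset.induction_on with
  | empty => simp
  | insert v S hv ih =>
    rw [image_insert, insert_subset_iff] at hS
    rw [insert_union, sum_insert hv]
    calc steinerDist G (insert v (S ∪ B)) ≤ steinerDist G (S ∪ B) + G.dist v (f v) :=
          hG.steinerDist_insert_le (mem_union_right S hS.1) v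
      _ ≤ steinerDist G B + ∑ w ∈ S, G.dist w (f w) + G.dist v (f v) := by
          gcongr
          exact ih hS.2
      _ = _ := by ring

lemma Connected.steinerDist_le_steinerDist_image_add_sum (hG : G.Connected) (f : V → V)
    (S : Finset V) :
    steinerDist G S ≤ steinerDist G (S.image f) + ∑ v ∈ S, G.dist v (f v) :=
  (hG.steinerDist_mono subset_union_left).trans (hG.steinerDist_union_le f subset_rfl)

lemma Connected.swk_le_sum_steinerDist_image_add [Fintype V] (hG : G.Connected) (a : V → V)
    (r : ℕ) (hdist : ∀ v, G.dist v (a v) ≤ r) (k : ℕ) :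
    swk k G ≤ ∑ S ∈ powersetCard k univ, steinerDist G (S.image a) +
      r * k * (Fintype.card V).choose k := by
  calc swk k G ≤ ∑ S ∈ powersetCard k univ, (steinerDist G (S.image a) + r * k) := by
        refine sum_le_sum fun S hS => (hG.steinerDist_le_steinerDist_image_add_sum a S).trans ?_
        gcongr
        calc ∑ v ∈ S, G.dist v (a v) ≤ #S • r := sum_le_card_nsmul _ _ _ fun v _ => hdist v
          _ = r * k := by rw [(mem_powersetCard.mp hS).2, smul_eq_mul, mul_comm]
    _ = _ := by rw [sum_add_distrib, sum_const, card_powersetCard, card_univ, smul_eq_mul, mul_comm]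

end SimpleGraph

lemma exists_equiv_sigma_fin_fiber {α β : Type*} [Fintype α] (a : α → β) (c : β → ℕ)
    (hc : ∀ x, c x = #{v | a v = x}) : ∃ e : α ≃ Σ x, Fin (c x), ∀ v, (e v).1 = a v :=
  ⟨(Equiv.sigmaFiberEquiv a).symm.trans <| Equiv.sigmaCongrRight fun x =>
    (Fintype.equivFin _).trans (finCongr (by rw [hc, Fintype.card_subtype])), fun _ => rfl⟩

lemma wswk_eq_sum_steinerDist_image {V : Type*} [Fintype V] (k : ℕ) (G : SimpleGraph V)
    (a : V → V) (c : V → ℕ) (hc : ∀ x, c x = #{v | a v = x}) :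
    wswk k G c = ∑ S ∈ powersetCard k univ, steinerDist G (S.image a) := by
  obtain ⟨e, he⟩ := exists_equiv_sigma_fin_fiber a c hc
  rw [wswk, ← map_univ_equiv e, powersetCard_map, sum_map]
  refine sum_congr rfl fun S _ => ?_
  simp [map_eq_image, image_image, Function.comp_def, he]

theorem unweighted_vs_weighted_steiner_wiener_general {V : Type*} [Fintype V]
    (T : SimpleGraph V) (hT : T.IsTree)
    (a : V → V) (r : ℕ)
    (hdist : ∀ v, T.dist v (a v) ≤ r) (k : ℕ)
    (c : V → ℕ) (hc : ∀ x, c x = (Finset.univ.filter fun v => a v = x).card) :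
    swk k T ≤ wswk k T c + r * k * Nat.choose (Fintype.card V) k := by
  rw [wswk_eq_sum_steinerDist_image k T a c hc]
  exact hT.connected.swk_le_sum_steinerDist_image_add a r hdist k

/-- if every vertex v of a spanning tree T of G is within distance r in T
of a designated vertex a_v ∈ A, and c(x) counts the vertices designated to x, then
SW_k(T) ≤ SW_k(T,c) + r·k·C(n,k). -/
theorem unweighted_vs_weighted_steiner_wiener {V : Type*} [Fintype V]
    (G T : SimpleGraph V) (hG : G.Connected) (hTG : T ≤ G) (hT : T.IsTree)
    (A : Set V) (a : V → V) (hmem : ∀ v, a v ∈ A) (r : ℕ)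
    (hdist : ∀ v, T.dist v (a v) ≤ r) (k : ℕ)
    (c : V → ℕ) (hc : ∀ x, c x = (Finset.univ.filter fun v => a v = x).card) :
    swk k T ≤ wswk k T c + r * k * Nat.choose (Fintype.card V) k :=
  unweighted_vs_weighted_steiner_wiener_general T hT a r hdist k c hc
end
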